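/- arXiv:1302.0592 — 2 statements merged into one kernel-verified Lean document; each statement's English description precedes it below -/
import Mathlib

section
/- Let n and k be natural numbers with k ≤ n, let z be an integer, and let u, v : ℝ → ℝ be n times continuously differentiable. Suppose r₁, …, r_{k+1} are real numbers such that ∏_{j=0}^{k−1}(t − j) = ∑_{s=1}^{k+1} r_s · t^{k+1−s} for every real t. Then for every x ∈ ℝ, ∑_{i=0}^{n} (1/k!) · (∏_{j=0}^{k−1}(i − z − j)) · C(n,i) · v^{(n−i)}(x) · u^{(i)}(x) = (1/k!) · ∑_{s=1}^{k+1} r_s · ∑_{l=0}^{k+1−s} C(k+1−s, l) · (−z)^{k+1−s−l} · ∑_{i=0}^{l} ( ∑_{s₀=0}^{i} (−1)^{s₀+i} · s₀^l / (s₀! · (i−s₀)!) ) · C(n,i) · i! · (u^{(i)}·v)^{(n−i)}(x), with the convention 0⁰ = 1. -/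
/-!
Write `w m = C(n,m) u⁽ᵐ⁾(x) v⁽ⁿ⁻ᵐ⁾(x)`. By Leibniz, `C(n,i) (u⁽ⁱ⁾v)⁽ⁿ⁻ⁱ⁾(x) = ∑ₘ C(n,m) C(m,i) w m`,
and the inner coefficient times `i!` is the forward difference `Δⁱ[tˡ](0)`. The Gregory–Newton
formula `mˡ = ∑ᵢ C(m,i) Δⁱ[tˡ](0)` (truncated at `i = l` because `Δⁱ` kills polynomials of degree
`< i`) therefore turns the innermost sum into `∑ₘ mˡ w m`. The binomial theorem then gives
`∑ₘ (m - z)^(k+1-s) w m`, and the hypothesis on `r` reassembles `∏ⱼ (m - z - j)`.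
-/

open Finset fwdDiff

theorem choose_mul_sum_range_choose_mul {R : Type*} [CommSemiring R] {n i : ℕ} (hi : i ≤ n)
    (U V : ℕ → R) :
    (n.choose i : R) * ∑ j ∈ range (n - i + 1), ((n - i).choose j : R) * U (i + j) * V (n - i - j)
      = ∑ m ∈ range (n + 1), (n.choose m : R) * (m.choose i : R) * U m * V (n - m) := by
  have below : ∑ m ∈ range i, (n.choose m : R) * (m.choose i : R) * U m * V (n - m) = 0 :=
    sum_eq_zero fun m hm => by simp [Nat.choose_eq_zero_of_lt (mem_range.1 hm)]
  rw [← sum_range_add_sum_Ico _ (by omega : i ≤ n + 1), below, zero_add, sum_Ico_eq_sum_range,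
    mul_sum, show n + 1 - i = n - i + 1 by omega]
  refine sum_congr rfl fun j _ => ?_
  have h := Nat.choose_mul (n := n) (Nat.le_add_right i j)
  rw [Nat.add_sub_cancel_left] at h
  rw [Nat.sub_sub, ← mul_assoc, ← mul_assoc]
  exact_mod_cast congrArg (fun c : ℕ => (c : R) * U (i + j) * V (n - (i + j))) h.symm

theorem pow_eq_sum_range_choose_mul_fwdDiff_iter {R : Type*} [CommRing R] (m l : ℕ) :
    (m : R) ^ l = ∑ i ∈ range (l + 1), (m.choose i : R) * (Δ_[1])^[i] (fun r : R => r ^ l) 0 := by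
  have newton := shift_eq_sum_fwdDiff_iter (1 : R) (fun r : R => r ^ l) m 0
  simp only [nsmul_eq_mul, mul_one, zero_add] at newton
  rw [newton]
  have hm : range (m + 1) ⊆ range (m + l + 1) := range_subset_range.2 (by omega)
  have hl : range (l + 1) ⊆ range (m + l + 1) := range_subset_range.2 (by omega)
  rw [sum_subset hm fun i _ hi => by
      simp [Nat.choose_eq_zero_of_lt (by simpa using hi : m < i)],
    sum_subset hl fun i _ hi => by
      simp [fwdDiff_iter_pow_eq_zero_of_lt (by simpa using hi : l < i)]]

theorem fwdDiff_iter_pow_zero_eq_factorial_mul {K : Type*} [Field K] [CharZero K] (i l : ℕ) :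
    (Δ_[1])^[i] (fun r : K => r ^ l) 0 = (∑ s ∈ range (i + 1),
      (-1 : K) ^ (s + i) * (s : K) ^ l / ((s.factorial : K) * ((i - s).factorial : K))) *
        (i.factorial : K) := by
  rw [fwdDiff_iter_eq_sum_shift, sum_mul]
  refine sum_congr rfl fun s hs => ?_
  obtain ⟨d, rfl⟩ := Nat.exists_eq_add_of_le (Nat.lt_succ_iff.1 (mem_range.1 hs))
  have sign : (-1 : K) ^ (s + (s + d)) = (-1) ^ d := by
    rw [← add_assoc, ← two_mul, pow_add, pow_mul, neg_one_sq, one_pow, one_mul]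
  simp only [sign, Nat.add_sub_cancel_left, zsmul_eq_mul, nsmul_eq_mul, mul_one, zero_add]
  push_cast
  rw [Nat.cast_choose K (Nat.le_add_right s d), Nat.add_sub_cancel_left]
  ring

theorem iteratedDeriv_iteratedDeriv {𝕜 F : Type*} [NontriviallyNormedField 𝕜]
    [NormedAddCommGroup F] [NormedSpace 𝕜 F] (i j : ℕ) (f : 𝕜 → F) :
    iteratedDeriv j (iteratedDeriv i f) = iteratedDeriv (i + j) f := by
  simp only [iteratedDeriv_eq_iterate, ← Function.iterate_add_apply, add_comm j i]

theorem choose_mul_iteratedDeriv_iteratedDeriv_mul {𝕜 : Type*} [NontriviallyNormedField 𝕜]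
    {n : ℕ} {u v : 𝕜 → 𝕜} (hu : ContDiff 𝕜 n u) (hv : ContDiff 𝕜 n v) (i : ℕ) (x : 𝕜) :
    (n.choose i : 𝕜) * iteratedDeriv (n - i) (fun y => iteratedDeriv i u y * v y) x
      = ∑ m ∈ range (n + 1), (n.choose m : 𝕜) * (m.choose i : 𝕜) *
          iteratedDeriv m u x * iteratedDeriv (n - m) v x := by
  rcases le_or_gt i n with hi | hi
  · have hu' : ContDiff 𝕜 (n - i : ℕ) (iteratedDeriv i u) := by
      rw [iteratedDeriv_eq_iterate]
      exact ContDiff.iterate_deriv' _ _ (by rwa [Nat.sub_add_cancel hi])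
    have hv' : ContDiff 𝕜 (n - i : ℕ) v := hv.of_le (by exact_mod_cast Nat.sub_le n i)
    rw [iteratedDeriv_fun_mul hu'.contDiffAt hv'.contDiffAt]
    simp only [iteratedDeriv_iteratedDeriv]
    exact choose_mul_sum_range_choose_mul hi (iteratedDeriv · u x) (iteratedDeriv · v x)
  · rw [Nat.choose_eq_zero_of_lt hi, Nat.cast_zero, zero_mul]
    exact (sum_eq_zero fun m hm => by
      rw [Nat.choose_eq_zero_of_lt (by have := mem_range.1 hm; omega : m < i)]; simp).symm

theorem sum_range_choose_mul_pow_mul_sum {R ι : Type*} [CommSemiring R] (S : Finset ι)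
    (g w : ι → R) (c : R) (p : ℕ) :
    ∑ l ∈ range (p + 1), (p.choose l : R) * c ^ (p - l) * ∑ m ∈ S, g m ^ l * w m
      = ∑ m ∈ S, (g m + c) ^ p * w m := by
  simp only [add_pow, mul_sum, sum_mul]
  rw [sum_comm]
  exact sum_congr rfl fun m _ => sum_congr rfl fun l _ => by ring

theorem sum_stirling_mul_iteratedDeriv_iteratedDeriv_mul {𝕜 : Type*} [NontriviallyNormedField 𝕜]
    [CharZero 𝕜] {n : ℕ} {u v : 𝕜 → 𝕜} (hu : ContDiff 𝕜 n u) (hv : ContDiff 𝕜 n v)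
    (l : ℕ) (x : 𝕜) :
    ∑ i ∈ range (l + 1),
        (∑ s ∈ range (i + 1),
          (-1 : 𝕜) ^ (s + i) * (s : 𝕜) ^ l / ((s.factorial : 𝕜) * ((i - s).factorial : 𝕜))) *
          (n.choose i : 𝕜) * (i.factorial : 𝕜) *
          iteratedDeriv (n - i) (fun y => iteratedDeriv i u y * v y) x
      = ∑ m ∈ range (n + 1),
          (m : 𝕜) ^ l * ((n.choose m : 𝕜) * iteratedDeriv m u x * iteratedDeriv (n - m) v x) := by
  calc _ = ∑ i ∈ range (l + 1), (Δ_[1])^[i] (fun r : 𝕜 => r ^ l) 0 *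
          ((n.choose i : 𝕜) * iteratedDeriv (n - i) (fun y => iteratedDeriv i u y * v y) x) :=
        sum_congr rfl fun i _ => by rw [fwdDiff_iter_pow_zero_eq_factorial_mul]; ring
    _ = ∑ m ∈ range (n + 1),
          (∑ i ∈ range (l + 1), (m.choose i : 𝕜) * (Δ_[1])^[i] (fun r : 𝕜 => r ^ l) 0) *
            ((n.choose m : 𝕜) * iteratedDeriv m u x * iteratedDeriv (n - m) v x) := by
        simp only [choose_mul_iteratedDeriv_iteratedDeriv_mul hu hv, mul_sum, sum_mul]
        rw [sum_comm]
        exact sum_congr rfl fun m _ => sum_congr rfl fun i _ => by ring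
    _ = _ := by simp only [← pow_eq_sum_range_choose_mul_fwdDiff_iter]

theorem statement3_general (n k : ℕ) (z : ℤ) (u v : ℝ → ℝ)
    (hu : ContDiff ℝ n u) (hv : ContDiff ℝ n v)
    (r : ℕ → ℝ)
    (hr : ∀ t : ℝ, ∏ j ∈ Finset.range k, (t - (j : ℝ))
        = ∑ s ∈ Finset.Icc 1 (k + 1), r s * t ^ (k + 1 - s))
    (x : ℝ) :
    ∑ i ∈ Finset.range (n + 1),
        (1 / (k.factorial : ℝ)) * (∏ j ∈ Finset.range k, ((i : ℝ) - (z : ℝ) - (j : ℝ))) *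
          (n.choose i : ℝ) * iteratedDeriv (n - i) v x * iteratedDeriv i u x
      = (1 / (k.factorial : ℝ)) *
          ∑ s ∈ Finset.Icc 1 (k + 1), r s *
            ∑ l ∈ Finset.range (k + 1 - s + 1),
              ((k + 1 - s).choose l : ℝ) * (-(z : ℝ)) ^ (k + 1 - s - l) *
                ∑ i ∈ Finset.range (l + 1),
                  (∑ s₀ ∈ Finset.range (i + 1),
                      (-1 : ℝ) ^ (s₀ + i) * (s₀ : ℝ) ^ l
                        / ((s₀.factorial : ℝ) * ((i - s₀).factorial : ℝ))) *
                    (n.choose i : ℝ) * (i.factorial : ℝ) *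
                    iteratedDeriv (n - i) (fun y => iteratedDeriv i u y * v y) x := by
  simp only [sum_stirling_mul_iteratedDeriv_iteratedDeriv_mul hu hv,
    sum_range_choose_mul_pow_mul_sum]
  simp only [mul_sum]
  rw [sum_comm]
  refine sum_congr rfl fun m _ => ?_
  rw [hr]
  simp only [mul_sum, sum_mul]
  exact sum_congr rfl fun s _ => by ring

/-- For naturals `k ≤ n`, an integer `z`, `n` times continuously differentiable
`u, v : ℝ → ℝ`, and reals `r₁, …, r_{k+1}` with
`∏_{j=0}^{k−1}(t − j) = ∑_{s=1}^{k+1} r_s · t^{k+1−s}` for all real `t`, one has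
`∑_{i=0}^{n} (1/k!)·(∏_{j=0}^{k−1}(i−z−j))·C(n,i)·v⁽ⁿ⁻ⁱ⁾(x)·u⁽ⁱ⁾(x)
 = (1/k!)·∑_{s=1}^{k+1} r_s · ∑_{l=0}^{k+1−s} C(k+1−s,l)·(−z)^{k+1−s−l}
     · ∑_{i=0}^{l} (∑_{s₀=0}^{i} (−1)^{s₀+i} s₀ˡ/(s₀!(i−s₀)!))·C(n,i)·i!·(u⁽ⁱ⁾·v)⁽ⁿ⁻ⁱ⁾(x)`,
with the convention `0⁰ = 1`. -/
theorem statement3 (n k : ℕ) (hkn : k ≤ n) (z : ℤ) (u v : ℝ → ℝ)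
    (hu : ContDiff ℝ n u) (hv : ContDiff ℝ n v)
    (r : ℕ → ℝ)
    (hr : ∀ t : ℝ, ∏ j ∈ Finset.range k, (t - (j : ℝ))
        = ∑ s ∈ Finset.Icc 1 (k + 1), r s * t ^ (k + 1 - s))
    (x : ℝ) :
    ∑ i ∈ Finset.range (n + 1),
        (1 / (k.factorial : ℝ)) * (∏ j ∈ Finset.range k, ((i : ℝ) - (z : ℝ) - (j : ℝ))) *
          (n.choose i : ℝ) * iteratedDeriv (n - i) v x * iteratedDeriv i u x
      = (1 / (k.factorial : ℝ)) *
          ∑ s ∈ Finset.Icc 1 (k + 1), r s *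
            ∑ l ∈ Finset.range (k + 1 - s + 1),
              ((k + 1 - s).choose l : ℝ) * (-(z : ℝ)) ^ (k + 1 - s - l) *
                ∑ i ∈ Finset.range (l + 1),
                  (∑ s₀ ∈ Finset.range (i + 1),
                      (-1 : ℝ) ^ (s₀ + i) * (s₀ : ℝ) ^ l
                        / ((s₀.factorial : ℝ) * ((i - s₀).factorial : ℝ))) *
                    (n.choose i : ℝ) * (i.factorial : ℝ) *
                    iteratedDeriv (n - i) (fun y => iteratedDeriv i u y * v y) x :=
  statement3_general n k z u v hu hv r hr x
end

section
/- For every natural number p ≥ 4 and every x ∈ ℝ, ξ_{p−2}(2p)(x) = (p²·(p−1)·(p+1)/3)·a(x)^{p−2}·a‴(x) + (2·p²·(p−1)·(p−2)·(p+1)/3)·a(x)^{p−3}·a′(x)·a″(x) + (p²·(p−1)·(p−2)·(p−3)·(p+1)/6)·a(x)^{p−4}·a′(x)³. -/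
/-!
For fixed `j`, the recursion expresses `ξ_{k+1}(2(k+1)+j)` through `ξ_k(2k+i)` with `i ≤ j` only,
the top term `i = j` entering with coefficient `a`. So along each diagonal `n = 2k + j` the
recursion is a first-order recurrence in `k`, and for `j = 0, …, 4` it can be solved in closed
form by induction on `k`, each diagonal feeding the next. The theorem is the case `j = 4`, `k = p − 2`.
-/

/-- The coefficients `ξ_k(n)` attached to a function `a : ℝ → ℝ`:
`ξ₀(0) = 0`, `ξ₀(n) = n·a⁽ⁿ⁻¹⁾` for `n ≥ 1`, and for `k ≥ 1`
`ξ_k(n) = ∑_{i=0}^{n−2k} ξ_{k−1}(i+2k−2)·C(n, i+2k)·a⁽ⁿ⁻²ᵏ⁻ⁱ⁾` when `n ≥ 2k`,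
`ξ_k(n) = 0` when `n < 2k`. -/
noncomputable def xi (a : ℝ → ℝ) : ℕ → ℕ → ℝ → ℝ
  | 0, n => if n = 0 then 0 else fun x => (n : ℝ) * iteratedDeriv (n - 1) a x
  | k + 1, n =>
      if 2 * (k + 1) ≤ n then
        fun x => ∑ i ∈ Finset.range (n - 2 * (k + 1) + 1),
          xi a k (i + 2 * (k + 1) - 2) x * ((n.choose (i + 2 * (k + 1))) : ℝ)
            * iteratedDeriv (n - 2 * (k + 1) - i) a x
      else 0

theorem Nat.cast_choose_three {K : Type*} [Field K] [CharZero K] (n : ℕ) :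
    (n.choose 3 : K) = n * (n - 1) * (n - 2) / 6 := by
  induction n with
  | zero => simp
  | succ n ih =>
    rw [Nat.choose_succ_succ, Nat.cast_add, ih, Nat.cast_choose_two]
    push_cast
    ring

section

variable (a : ℝ → ℝ) (x : ℝ)

theorem xi_succ_two_mul_add (k j : ℕ) :
    xi a (k + 1) (2 * (k + 1) + j) x = ∑ i ∈ Finset.range (j + 1),
      xi a k (2 * k + i) x * ((2 * (k + 1) + j).choose (j - i) : ℝ) * iteratedDeriv (j - i) a x := by
  rw [xi, if_pos (by omega), show 2 * (k + 1) + j - 2 * (k + 1) + 1 = j + 1 by omega]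
  refine Finset.sum_congr rfl fun i hi => ?_
  have hij : i ≤ j := Nat.lt_succ_iff.mp (Finset.mem_range.mp hi)
  rw [show i + 2 * (k + 1) - 2 = 2 * k + i by omega, show 2 * (k + 1) + j - 2 * (k + 1) - i = j - i by omega,
    Nat.choose_symm_of_eq_add (by omega : 2 * (k + 1) + j = i + 2 * (k + 1) + (j - i))]

theorem xi_two_mul (k : ℕ) : xi a k (2 * k) x = 0 := by
  induction k with
  | zero => simp [xi]
  | succ k ih => simpa [ih] using xi_succ_two_mul_add a x k 0

theorem xi_two_mul_add_one (k : ℕ) : xi a k (2 * k + 1) x = a x ^ (k + 1) := by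
  induction k with
  | zero => simp [xi]
  | succ k ih => simp [xi_succ_two_mul_add, Finset.sum_range_succ, xi_two_mul, ih, pow_succ]

theorem xi_two_mul_add_two (k : ℕ) :
    xi a k (2 * k + 2) x = ((k : ℝ) + 1) * ((k : ℝ) + 2) * a x ^ k * deriv a x := by
  induction k with
  | zero => simp [xi]
  | succ k ih =>
    rw [xi_succ_two_mul_add]
    simp only [Finset.sum_range_succ, Finset.sum_range_zero, Nat.reduceSub, tsub_self, tsub_zero,
      add_zero, zero_add, xi_two_mul, zero_mul, xi_two_mul_add_one, ih,
      Nat.choose_zero_right, Nat.choose_one_right, iteratedDeriv_zero, iteratedDeriv_one]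
    push_cast
    ring

theorem xi_two_mul_add_three (k : ℕ) :
    xi a k (2 * k + 3) x
      = ((k : ℝ) + 1) * ((k : ℝ) + 2) * (4 * (k : ℝ) + 9) / 6 * a x ^ k * iteratedDeriv 2 a x
        + (k : ℝ) * ((k : ℝ) + 1) * ((k : ℝ) + 2) * (3 * (k : ℝ) + 7) / 6 * a x ^ (k - 1)
          * deriv a x ^ 2 := by
  induction k with
  | zero => norm_num [xi]
  | succ k ih =>
    rw [xi_succ_two_mul_add]
    simp only [Finset.sum_range_succ, Finset.sum_range_zero, Nat.reduceSub, tsub_self, tsub_zero,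
      add_zero, zero_add, xi_two_mul, zero_mul, xi_two_mul_add_one, xi_two_mul_add_two, ih,
      Nat.choose_zero_right, Nat.choose_one_right, Nat.cast_choose_two, iteratedDeriv_zero, iteratedDeriv_one]
    push_cast
    -- `ring` cannot see through the truncated exponent `k - 1`; at `k = 0` its coefficient vanishes.
    rcases k with _ | k
    · norm_num; ring
    · push_cast
      ring

theorem xi_two_mul_add_four (k : ℕ) :
    xi a k (2 * k + 4) x
      = ((k : ℝ) + 1) * ((k : ℝ) + 2) ^ 2 * ((k : ℝ) + 3) / 3 * a x ^ k * iteratedDeriv 3 a x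
        + 2 * (k : ℝ) * ((k : ℝ) + 1) * ((k : ℝ) + 2) ^ 2 * ((k : ℝ) + 3) / 3 * a x ^ (k - 1)
          * deriv a x * iteratedDeriv 2 a x
        + (k : ℝ) * ((k : ℝ) - 1) * ((k : ℝ) + 1) * ((k : ℝ) + 2) ^ 2 * ((k : ℝ) + 3) / 6
          * a x ^ (k - 2) * deriv a x ^ 3 := by
  induction k with
  | zero => norm_num [xi]
  | succ k ih =>
    rw [xi_succ_two_mul_add]
    simp only [Finset.sum_range_succ, Finset.sum_range_zero, Nat.reduceSub, tsub_self, tsub_zero,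
      add_zero, zero_add, xi_two_mul, zero_mul, xi_two_mul_add_one, xi_two_mul_add_two,
      xi_two_mul_add_three, ih,
      Nat.choose_zero_right, Nat.choose_one_right, Nat.cast_choose_two, Nat.cast_choose_three,
      iteratedDeriv_zero, iteratedDeriv_one]
    push_cast
    rcases k with _ | _ | k
    · norm_num; ring
    · norm_num; ring
    · push_cast
      ring

end

theorem statement13_general (a : ℝ → ℝ) (p : ℕ) (hp : 4 ≤ p) (x : ℝ) :
    xi a (p - 2) (2 * p) x
      = (p : ℝ) ^ 2 * ((p : ℝ) - 1) * ((p : ℝ) + 1) / 3 * a x ^ (p - 2)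
          * iteratedDeriv 3 a x
        + 2 * (p : ℝ) ^ 2 * ((p : ℝ) - 1) * ((p : ℝ) - 2) * ((p : ℝ) + 1) / 3 * a x ^ (p - 3)
          * deriv a x * iteratedDeriv 2 a x
        + (p : ℝ) ^ 2 * ((p : ℝ) - 1) * ((p : ℝ) - 2) * ((p : ℝ) - 3) * ((p : ℝ) + 1) / 6
          * a x ^ (p - 4) * (deriv a x) ^ 3 := by
  rw [show 2 * p = 2 * (p - 2) + 4 by omega, xi_two_mul_add_four,
    show p - 2 - 1 = p - 3 by omega, show p - 2 - 2 = p - 4 by omega, Nat.cast_sub (by omega : 2 ≤ p)]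
  push_cast
  ring

/-- For every natural number `p ≥ 4` and every `x`,
`ξ_{p−2}(2p)(x) = (p²(p−1)(p+1)/3)·a^{p−2}·a‴ + (2p²(p−1)(p−2)(p+1)/3)·a^{p−3}·a′·a″
  + (p²(p−1)(p−2)(p−3)(p+1)/6)·a^{p−4}·a′³` at `x`. -/
theorem statement13 (a : ℝ → ℝ) (ha : ContDiff ℝ (⊤ : ℕ∞) a) (p : ℕ) (hp : 4 ≤ p) (x : ℝ) :
    xi a (p - 2) (2 * p) x
      = (p : ℝ) ^ 2 * ((p : ℝ) - 1) * ((p : ℝ) + 1) / 3 * a x ^ (p - 2)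
          * iteratedDeriv 3 a x
        + 2 * (p : ℝ) ^ 2 * ((p : ℝ) - 1) * ((p : ℝ) - 2) * ((p : ℝ) + 1) / 3 * a x ^ (p - 3)
          * deriv a x * iteratedDeriv 2 a x
        + (p : ℝ) ^ 2 * ((p : ℝ) - 1) * ((p : ℝ) - 2) * ((p : ℝ) - 3) * ((p : ℝ) + 1) / 6
          * a x ^ (p - 4) * (deriv a x) ^ 3 :=
  statement13_general a p hp x
end
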